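/- arXiv:2502.16543 — 6 statements merged into one kernel-verified Lean document; each statement's English description precedes it below -/
import Mathlib

section
/- Define polynomials f_n(q) for n ≥ 1 by f_n(q) = Σ_{i=1}^{n} (−1)^{i−1}(2i−1) q^{n+1−i} + (−1)^n (n+1), with f_0(q) = 1 and f_n(q) = 0 for n < 0. Then for all n ≥ 0, (q−1)·Σ_{t≥0} q^t f_{n−2t}(q) = f_{n+1}(q) + (−1)^n. -/
open Polynomial Finset

/-- The Hall polynomials `f_n(q)`: `f_n = Σ_{i=1}^n (-1)^{i-1}(2i-1) q^{n+1-i} + (-1)^n (n+1)`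
for `n ≥ 1`, `f_0 = 1`, and `f_n = 0` for `n < 0`. -/
noncomputable def hallF (n : ℤ) : Polynomial ℤ :=
  if n < 0 then 0
  else if n = 0 then 1
  else ∑ i ∈ Finset.Icc 1 n.toNat, Polynomial.C ((-1 : ℤ) ^ (i - 1) * (2 * i - 1)) *
        Polynomial.X ^ (n.toNat + 1 - i) + Polynomial.C ((-1 : ℤ) ^ n.toNat * (n.toNat + 1))

lemma hallF_neg (n : ℤ) (h : n < 0) : hallF n = 0 := by simp [hallF, h]

lemma hallF_zero : hallF 0 = 1 := by simp [hallF]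

lemma hallF_natCast (n : ℕ) (h : n ≠ 0) :
    hallF (n : ℤ) = ∑ i ∈ Finset.Icc 1 n, C ((-1 : ℤ) ^ (i - 1) * (2 * i - 1)) *
        X ^ (n + 1 - i) + C ((-1 : ℤ) ^ n * (n + 1)) := by
  rw [hallF]
  simp [h, Int.toNat_natCast]

lemma hallF_rec (n : ℕ) :
    hallF ((n : ℤ) + 1) = X * hallF (n : ℤ) +
      (-1 : Polynomial ℤ) ^ (n + 1) * (((n : Polynomial ℤ) + 2) - (n : Polynomial ℤ) * X) := by
  rcases Nat.eq_zero_or_pos n with rfl | hn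
  · have h1 : ((0 : ℕ) : ℤ) + 1 = ((1 : ℕ) : ℤ) := by norm_num
    rw [h1, hallF_natCast 1 one_ne_zero]
    norm_num [hallF_zero]
  · have h1 : ((n : ℤ) + 1) = ((n + 1 : ℕ) : ℤ) := by push_cast; ring
    rw [h1, hallF_natCast (n+1) (Nat.succ_ne_zero n), hallF_natCast n hn.ne',
      Finset.sum_Icc_succ_top (by omega : 1 ≤ n + 1)]
    have hXsum : ∑ i ∈ Finset.Icc 1 n,
        C ((-1 : ℤ) ^ (i - 1) * (2 * i - 1)) * X ^ (n + 1 + 1 - i)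
          = X * ∑ i ∈ Finset.Icc 1 n, C ((-1 : ℤ) ^ (i - 1) * (2 * i - 1)) * X ^ (n + 1 - i) := by
      rw [Finset.mul_sum]
      refine Finset.sum_congr rfl fun i hi => ?_
      simp only [Finset.mem_Icc] at hi
      have : n + 1 + 1 - i = (n + 1 - i) + 1 := by omega
      rw [this, pow_succ]; ring
    have e2 : n + 1 + 1 - (n + 1) = 1 := by omega
    have e3 : n + 1 - 1 = n := rfl
    rw [hXsum, e2, e3, pow_one]
    simp only [map_mul, map_pow, map_add, map_sub, map_one, map_neg, map_ofNat,
      Polynomial.C_eq_natCast, Nat.cast_add, Nat.cast_one]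
    ring

lemma sum_step (n : ℕ) :
    ∑ t ∈ Finset.range (n + 2 + 1), X ^ t * hallF (((n:ℤ) + 2) - 2 * t)
      = hallF ((n : ℤ) + 2) +
        X * ∑ t ∈ Finset.range (n + 1), X ^ t * hallF ((n : ℤ) - 2 * t) := by
  rw [Finset.sum_range_succ' (fun t => X ^ t * hallF (((n:ℤ) + 2) - 2 * t)) (n + 2)]
  rw [Finset.sum_range_succ]
  have h0 : hallF ((n:ℤ) + 2 - 2 * ((n:ℕ) + 1 + 1 : ℕ)) = 0 := by
    apply hallF_neg; push_cast; omega
  rw [h0]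
  rw [Finset.mul_sum]
  simp only [pow_zero, one_mul, mul_zero, add_zero, Nat.cast_zero, mul_zero, sub_zero]
  rw [add_comm]
  congr 1
  refine Finset.sum_congr rfl fun t ht => ?_
  have : ((n:ℤ) + 2 - 2 * ((t:ℕ) + 1 : ℕ)) = (n:ℤ) - 2 * t := by push_cast; ring
  rw [this, pow_succ]
  ring


/-- For all `n ≥ 0`, `(q - 1) · Σ_{t ≥ 0} q^t f_{n-2t}(q) = f_{n+1}(q) + (-1)^n`.  The sum is
finite since `f_m = 0` for `m < 0`; summing `t` over `0, ..., n` suffices. -/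
theorem hallF_sum_identity (n : ℕ) :
    (Polynomial.X - 1) * ∑ t ∈ Finset.range (n + 1), Polynomial.X ^ t * hallF ((n : ℤ) - 2 * t) =
      hallF ((n : ℤ) + 1) + Polynomial.C ((-1 : ℤ) ^ n) := by

  induction n using Nat.strong_induction_on with
  | _ n ih =>
    match n with
    | 0 =>
      simp only [Finset.range_one, Finset.sum_singleton, pow_zero, one_mul,
        Nat.cast_zero, mul_zero, sub_zero, zero_add, hallF_zero, pow_zero, map_one]
      have := hallF_rec 0
      push_cast at this
      rw [this, hallF_zero]
      ring
    | 1 =>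
      have hsum : ∑ t ∈ Finset.range 2, X ^ t * hallF ((1 : ℤ) - 2 * (t:ℕ)) = hallF 1 := by
        rw [Finset.sum_range_succ, Finset.sum_range_one]
        norm_num
        exact hallF_neg _ (by norm_num)
      push_cast at hsum ⊢
      rw [hsum]
      have r0 := hallF_rec 0
      have r1 := hallF_rec 1
      push_cast at r0 r1
      rw [r1, r0, hallF_zero]
      simp only [map_pow, map_neg, map_one]
      ring
    | (m + 2) =>
      have hstep := sum_step m
      have ihm := ih m (by omega)
      have r1 := hallF_rec (m + 1)
      have r2 := hallF_rec (m + 2)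
      push_cast at hstep ihm r1 r2 ⊢
      rw [show (m:ℤ) + 1 + 1 = (m:ℤ) + 2 by ring] at r1
      rw [hstep, mul_add, mul_left_comm, ihm, r2, r1]
      simp only [map_pow, map_neg, map_one]
      ring
end

section
/- With f_n and s_n^{(k)} as defined by their closed formulas, s_n^{(1)}(q) − s_{n−1}^{(2)}(q) = f_{2n}(q) for all n ≥ 0. -/
open Polynomial Finset

/-- The polynomials `s_n^{(k)}(q) = Σ_{i=1}^{2n+k-1} (-1)^{i-1} i q^{2n+k-i} - (-1)^k (n+1)`
for `n ≥ 1`, with the conventions `s_0^{(k)} = (q-1)^{k-1}` (for `k ≥ 1`) and `s_{-1}^{(k)} = 0`. -/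
noncomputable def hallS (n : ℤ) (k : ℕ) : Polynomial ℤ :=
  if n < 0 then 0
  else if n = 0 then (Polynomial.X - 1) ^ (k - 1)
  else ∑ i ∈ Finset.Icc 1 (2 * n.toNat + k - 1), Polynomial.C ((-1 : ℤ) ^ (i - 1) * i) *
        Polynomial.X ^ (2 * n.toNat + k - i) - Polynomial.C ((-1 : ℤ) ^ k * (n.toNat + 1))

lemma hallS_one_eq (n : ℕ) (hn : 1 ≤ n) :
    hallS (n : ℤ) 1 =
      (∑ i ∈ Finset.Icc 1 (2 * n), Polynomial.C ((-1 : ℤ) ^ (i - 1) * i) *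
        Polynomial.X ^ (2 * n + 1 - i)) + Polynomial.C ((n : ℤ) + 1) := by
  have h0 : ¬ ((n : ℤ) < 0) := by omega
  have h1 : ((n : ℤ) ≠ 0) := by omega
  simp only [hallS, h0, if_false, h1, if_false, Int.toNat_natCast]
  rw [show 2 * n + 1 - 1 = 2 * n from by omega]
  rw [show ((-1 : ℤ) ^ 1 * ((n : ℤ) + 1)) = -((n : ℤ) + 1) from by ring, map_neg,
    sub_neg_eq_add]

lemma hallS_two_eq (n : ℕ) (hn : 1 ≤ n) :
    hallS ((n : ℤ) - 1) 2 =
      (∑ i ∈ Finset.Icc 1 (2 * n - 1), Polynomial.C ((-1 : ℤ) ^ (i - 1) * i) *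
        Polynomial.X ^ (2 * n - i)) - Polynomial.C (n : ℤ) := by
  rcases eq_or_lt_of_le hn with h | hn2
  · -- n = 1
    subst h
    norm_num [hallS]
  · -- n ≥ 2
    have h0 : ¬ (((n : ℕ) : ℤ) - 1 < 0) := by omega
    have h1 : (((n : ℕ) : ℤ) - 1 ≠ 0) := by omega
    simp only [hallS, h0, if_false, h1, if_false]
    rw [show (((n : ℕ) : ℤ) - 1).toNat = n - 1 from by omega]
    rw [show 2 * (n - 1) + 2 = 2 * n from by omega]
    rw [show ((-1 : ℤ) ^ 2 * (((n - 1 : ℕ) : ℤ) + 1)) = (n : ℤ) from by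
      have : (((n - 1 : ℕ)) : ℤ) = (n : ℤ) - 1 := by omega
      rw [this]; ring]

lemma hallF_eq (n : ℕ) (hn : 1 ≤ n) :
    hallF (2 * (n : ℤ)) =
      (∑ i ∈ Finset.Icc 1 (2 * n), Polynomial.C ((-1 : ℤ) ^ (i - 1) * (2 * i - 1)) *
        Polynomial.X ^ (2 * n + 1 - i)) + Polynomial.C (2 * (n : ℤ) + 1) := by
  have h0 : ¬ ((2 * (n : ℤ)) < 0) := by omega
  have h1 : ((2 * (n : ℤ)) ≠ 0) := by omega
  simp only [hallF, h0, if_false, h1, if_false]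
  rw [show (2 * (n : ℤ)).toNat = 2 * n from by omega]
  congr 1
  rw [show ((-1 : ℤ) ^ (2 * n)) = 1 from (Even.neg_one_pow ⟨n, by ring⟩)]
  push_cast
  ring

lemma key_sum (n : ℕ) (hn : 1 ≤ n) :
    (∑ i ∈ Finset.Icc 1 (2 * n), Polynomial.C ((-1 : ℤ) ^ (i - 1) * i) *
        Polynomial.X ^ (2 * n + 1 - i)) -
      (∑ i ∈ Finset.Icc 1 (2 * n - 1), Polynomial.C ((-1 : ℤ) ^ (i - 1) * i) *
        Polynomial.X ^ (2 * n - i)) =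
    ∑ i ∈ Finset.Icc 1 (2 * n), Polynomial.C ((-1 : ℤ) ^ (i - 1) * (2 * i - 1)) *
        Polynomial.X ^ (2 * n + 1 - i) := by
  have hre : (∑ i ∈ Finset.Icc 1 (2 * n - 1), Polynomial.C ((-1 : ℤ) ^ (i - 1) * i) *
        Polynomial.X ^ (2 * n - i)) =
      ∑ j ∈ Finset.Icc 1 (2 * n), Polynomial.C ((-1 : ℤ) ^ (j - 2) * ((j - 1 : ℕ) : ℤ)) *
        Polynomial.X ^ (2 * n + 1 - j) := by
    rw [show Finset.Icc 1 (2 * n) = insert 1 (Finset.Icc 2 (2 * n)) from by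
        ext x; simp only [Finset.mem_Icc, Finset.mem_insert]; omega]
    rw [Finset.sum_insert (by simp)]
    rw [show Finset.Icc 2 (2 * n) = (Finset.Icc 1 (2 * n - 1)).map
        (addRightEmbedding 1) from by rw [Finset.map_add_right_Icc]; congr 1; omega]
    rw [Finset.sum_map]
    simp only [addRightEmbedding_apply]
    rw [show Polynomial.C ((-1 : ℤ) ^ (1 - 2) * ((1 - 1 : ℕ) : ℤ)) *
        Polynomial.X ^ (2 * n + 1 - 1) = 0 from by norm_num, zero_add]
    refine Finset.sum_congr rfl fun i hi => ?_
    have e1 : i + 1 - 2 = i - 1 := by omega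
    have e2 : ((i + 1 - 1 : ℕ) : ℤ) = (i : ℤ) := by omega
    have e3 : 2 * n + 1 - (i + 1) = 2 * n - i := by omega
    rw [e1, e2, e3]
  rw [hre, ← Finset.sum_sub_distrib]
  refine Finset.sum_congr rfl fun i hi => ?_
  have hi1 : 1 ≤ i := (Finset.mem_Icc.mp hi).1
  rcases eq_or_lt_of_le hi1 with h | hi2
  · subst h; norm_num
  · obtain ⟨k, rfl⟩ : ∃ k, i = k + 2 := ⟨i - 2, by omega⟩
    rw [show k + 2 - 1 = k + 1 from by omega, show k + 2 - 2 = k from by omega]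
    rw [← sub_mul, ← Polynomial.C_sub]
    congr 2
    push_cast
    ring

/-- `s_n^{(1)} - s_{n-1}^{(2)} = f_{2n}` for all `n ≥ 0`. -/
theorem hallS_one_sub_two_eq_f (n : ℕ) :
    hallS (n : ℤ) 1 - hallS ((n : ℤ) - 1) 2 = hallF (2 * (n : ℤ)) := by
  rcases Nat.eq_zero_or_pos n with h | hn
  · subst h; norm_num [hallS, hallF]
  · rw [hallS_one_eq n hn, hallS_two_eq n hn, hallF_eq n hn, ← key_sum n hn]
    rw [show (2 * (n : ℤ) + 1) = ((n : ℤ) + 1) + n from by ring]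
    simp only [Polynomial.C_add]
    abel
end

section
/- With f_n and s_n^{(k)} as defined by their closed formulas, s_n^{(2)}(q) − s_n^{(1)}(q) = f_{2n+1}(q) for all n ≥ 0. -/
/-!
Both `s_n^{(k)}` and `f_m` are a sum `Σ_{i=1}^m c_i q^{m+1-i}` plus a constant. Shifting the index
of the sum in `s_n^{(1)}` by one, the difference of the sums of `s_n^{(2)}` and `s_n^{(1)}` becomes
a single sum with coefficients `(-1)^{i-1} i - (-1)^{i-2} (i-1) = (-1)^{i-1} (2i-1)`, those of
`f_{2n+1}`, while the constants `-(n+1) - (n+1)` give the constant `-(2n+2)` of `f_{2n+1}`.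
-/

open Polynomial Finset

section

variable {R : Type*} [CommRing R]

noncomputable def descSum (c : ℕ → R) (m : ℕ) : R[X] :=
  ∑ i ∈ Icc 1 m, C (c i) * X ^ (m + 1 - i)

theorem descSum_succ (c : ℕ → R) (m : ℕ) :
    descSum c (m + 1) = X * (descSum c m + C (c (m + 1))) := by
  rw [descSum, sum_Icc_succ_top (by omega), descSum, mul_add, mul_sum,
    show m + 1 + 1 - (m + 1) = 1 by omega, pow_one, mul_comm X (C _)]
  congr 1
  refine sum_congr rfl fun i hi => ?_
  rw [show m + 1 + 1 - i = (m + 1 - i) + 1 by grind, pow_succ]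
  ring

theorem descSum_succ_sub (c : ℕ → R) (hc : c 0 = 0) (m : ℕ) :
    descSum c (m + 1) - descSum c m = descSum (fun i => c i - c (i - 1)) (m + 1) := by
  induction m with
  | zero => simp [descSum, hc]
  | succ m ih =>
    rw [descSum_succ c (m + 1), descSum_succ _ (m + 1), ← ih, descSum_succ, Nat.add_sub_cancel,
      C_sub]
    ring

end

theorem neg_one_pow_mul_sub_pred {i : ℕ} (hi : 1 ≤ i) :
    (-1 : ℤ) ^ (i - 1) * i - (-1) ^ (i - 1 - 1) * ((i - 1 : ℕ) : ℤ) =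
      (-1) ^ (i - 1) * (2 * i - 1) := by
  obtain ⟨j, rfl⟩ := Nat.exists_eq_add_of_le' hi
  cases j with
  | zero => simp
  | succ j => simp only [Nat.add_sub_cancel, pow_succ]; push_cast; ring

theorem hallS_of_pos {n : ℕ} (hn : 0 < n) (k : ℕ) :
    hallS n k = descSum (fun i => (-1 : ℤ) ^ (i - 1) * i) (2 * n + k - 1) -
      C ((-1 : ℤ) ^ k * (n + 1)) := by
  simp only [hallS, descSum, Int.toNat_natCast, if_neg (show ¬ (n : ℤ) < 0 by omega),
    if_neg (show (n : ℤ) ≠ 0 by omega), show 2 * n + k - 1 + 1 = 2 * n + k by omega]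

theorem hallF_of_pos {m : ℕ} (hm : 0 < m) :
    hallF m = descSum (fun i => (-1 : ℤ) ^ (i - 1) * (2 * i - 1)) m +
      C ((-1 : ℤ) ^ m * (m + 1)) := by
  simp only [hallF, descSum, Int.toNat_natCast, if_neg (show ¬ (m : ℤ) < 0 by omega),
    if_neg (show (m : ℤ) ≠ 0 by omega)]

/-- `s_n^{(2)} - s_n^{(1)} = f_{2n+1}` for all `n ≥ 0`. -/
theorem hallS_two_sub_one_eq_f (n : ℕ) :
    hallS (n : ℤ) 2 - hallS (n : ℤ) 1 = hallF (2 * (n : ℤ) + 1) := by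
  rcases Nat.eq_zero_or_pos n with rfl | hn
  · simp [hallS, hallF]
    ring
  have hcast : 2 * (n : ℤ) + 1 = ((2 * n + 1 : ℕ) : ℤ) := by push_cast; ring
  rw [hcast, hallS_of_pos hn, hallS_of_pos hn, hallF_of_pos (by omega),
    show 2 * n + 2 - 1 = 2 * n + 1 by omega, show 2 * n + 1 - 1 = 2 * n by omega]
  have hdiff := descSum_succ_sub (fun i => (-1 : ℤ) ^ (i - 1) * i) (by simp) (2 * n)
  have hcoeff : descSum (fun i => (-1 : ℤ) ^ (i - 1) * i - (-1) ^ (i - 1 - 1) * ((i - 1 : ℕ) : ℤ))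
      (2 * n + 1) = descSum (fun i => (-1 : ℤ) ^ (i - 1) * (2 * i - 1)) (2 * n + 1) :=
    sum_congr rfl fun i hi => by dsimp only; rw [neg_one_pow_mul_sub_pred (mem_Icc.1 hi).1]
  rw [(odd_two_mul_add_one n).neg_one_pow]
  simp only [map_mul, map_add, map_neg, map_pow, map_one, map_natCast, map_ofNat, Nat.cast_add,
    Nat.cast_mul, Nat.cast_ofNat, Nat.cast_one]
  linear_combination hdiff + hcoeff
end

section
/- Let A be an abelian category with a pair of exceptional objects (E₁, E₂) over a field k that is orthogonal (Hom(E₁,E₂) = Hom(E₂,E₁) = 0 and Ext¹(E₂,E₁) = 0), and suppose there is a non-split short exact sequence 0 → E₂ → E → E₁ → 0 with E exceptional. Then dim_k Ext¹(E₁,E₂) = dim_k Hom(E₂,E) = dim_k Hom(E,E₁) = 1. -/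
/-!
Ext¹(X, Y) is computed from any projective presentation `K ↪ P ↠ X` as `Hom(K, Y)` modulo the
maps that extend to `P`. Present `E₁` through `P ↠ E ↠ E₁` with `P` projective. The extension
`E₂ ↪ E ↠ E₁` induces `q : ker(P ↠ E₁) ↠ E₂`, whose class is nonzero because the extension does
not split. It spans: `Ext¹(E, E₂) = 0` (from `Ext¹(E, E) = 0` and `Hom(E, E₁) = k p`) lets one
correct any `f : ker(P ↠ E₁) → E₂` by a map extending to `P` until it vanishes on `ker(P ↠ E)`;
then `f` factors through `q`, hence is a multiple of `q` since `End(E₂) = k`. The two `Hom`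
dimensions follow from `Hom(E₂, E₁) = 0` by the exactness of `Hom` on the sequence.
-/

open CategoryTheory CategoryTheory.Limits

/-- An object `X` of a `k`-linear abelian category is exceptional if `End(X) ≅ k`
(i.e. `dim_k End(X) = 1`) and `Ext¹(X, X) = 0`. -/
def IsExceptional (k : Type*) [Field k] (C : Type*) [Category C] [Abelian C] [Linear k C]
    [EnoughProjectives C] (X : C) : Prop :=
  Module.finrank k (X ⟶ X) = 1 ∧
    Subsingleton (((Ext k C 1).obj (Opposite.op X)).obj X)

namespace CategoryTheory.ProjectiveResolution

section ExtOne

variable {C : Type*} [Category C] [Abelian C] {X : C} (P : ProjectiveResolution X)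

noncomputable def toKernel : P.complex.X 1 ⟶ kernel (P.π.f 0) :=
  kernel.lift _ (P.complex.d 1 0) P.complex_d_comp_π_f_zero

lemma toKernel_ι : P.toKernel ≫ kernel.ι (P.π.f 0) = P.complex.d 1 0 :=
  kernel.lift_ι _ _ _

instance : Epi P.toKernel :=
  (ShortComplex.exact_iff_epi_kernel_lift _).1 P.exact₀

lemma d_two_one_comp_toKernel : P.complex.d 2 1 ≫ P.toKernel = 0 := by
  rw [← cancel_mono (kernel.ι (P.π.f 0)), Category.assoc, toKernel_ι, zero_comp]
  exact P.complex.d_comp_d 2 1 0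

lemma exact_d_two_one_toKernel :
    (ShortComplex.mk _ _ P.d_two_one_comp_toKernel).Exact := by
  let φ : ShortComplex.mk _ _ P.d_two_one_comp_toKernel ⟶
      ShortComplex.mk _ _ (P.complex.d_comp_d 2 1 0) :=
    { τ₁ := 𝟙 _
      τ₂ := 𝟙 _
      τ₃ := kernel.ι (P.π.f 0)
      comm₂₃ := by simpa using P.toKernel_ι.symm }
  exact (ShortComplex.exact_iff_of_epi_of_isIso_of_mono φ).2 (P.exact_succ 0)

variable (R : Type*) [Ring R] [Linear R C] (Y : C)

noncomputable def kernelHomToCocycles :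
    (kernel (P.π.f 0) ⟶ Y) →ₗ[R] LinearMap.ker ((P.complex.linearYonedaObj R Y).sc' 0 1 2).g.hom :=
  LinearMap.codRestrict _ (Linear.leftComp R Y P.toKernel) fun f => by
    change P.complex.d 2 1 ≫ P.toKernel ≫ f = 0
    rw [← Category.assoc, P.d_two_one_comp_toKernel, zero_comp]

lemma bijective_kernelHomToCocycles : Function.Bijective (P.kernelHomToCocycles R Y) := by
  constructor
  · intro f g h
    exact (cancel_epi P.toKernel).1 (congrArg Subtype.val h)
  · rintro ⟨g, hg⟩
    obtain ⟨f, hf⟩ := CokernelCofork.IsColimit.desc' P.exact_d_two_one_toKernel.gIsCokernel g hg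
    exact ⟨f, Subtype.ext hf⟩

lemma kernelHomToCocycles_map_range :
    (LinearMap.range (Linear.leftComp R Y (kernel.ι (P.π.f 0)))).map (P.kernelHomToCocycles R Y) =
      LinearMap.range ((P.complex.linearYonedaObj R Y).sc' 0 1 2).moduleCatToCycles := by
  rw [← LinearMap.range_comp]
  congr 1
  ext h
  change P.toKernel ≫ kernel.ι (P.π.f 0) ≫ h = P.complex.d 1 0 ≫ h
  rw [← Category.assoc, toKernel_ι]

variable [EnoughProjectives C]

noncomputable def extOneLinearEquiv :
    ((Ext R C 1).obj (Opposite.op X)).obj Y ≃ₗ[R]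
      (kernel (P.π.f 0) ⟶ Y) ⧸ LinearMap.range (Linear.leftComp R Y (kernel.ι (P.π.f 0))) :=
  (P.isoExt 1 Y ≪≫ (P.complex.linearYonedaObj R Y).homologyIsoSc' 0 1 2 (by simp) (by simp) ≪≫
    ShortComplex.moduleCatHomologyIso _).toLinearEquiv.trans
    (Submodule.Quotient.equiv _ _ (LinearEquiv.ofBijective _ (P.bijective_kernelHomToCocycles R Y))
      (P.kernelHomToCocycles_map_range R Y)).symm

end ExtOne

section OfEpi

open Projective

variable {C : Type*} [Category C] [Abelian C] [EnoughProjectives C] {X P : C} (π : P ⟶ X)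

noncomputable def ofEpiComplex : ChainComplex C ℕ :=
  ChainComplex.mk' P (syzygies π) (d π)
    (fun f => ⟨_, d f, by erw [Category.assoc, kernel.condition, comp_zero]⟩)

lemma ofEpiComplex_d_one_zero : (ofEpiComplex π).d 1 0 = d π := by
  simp [ofEpiComplex]

lemma ofEpiComplex_exactAt_succ (n : ℕ) : (ofEpiComplex π).ExactAt (n + 1) := by
  match n with
  | 0 =>
    rw [HomologicalComplex.exactAt_iff' _ 2 1 0 (by simp) (by simp)]
    refine ShortComplex.exact_of_iso ?_ (exact_d_f (d π))
    refine ShortComplex.isoMk (Iso.refl _) (Iso.refl _) (Iso.refl _) ?_ ?_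
    · erw [Category.comp_id, Category.id_comp]
      exact ChainComplex.mk_d_2_1 _ _ _ _ _ _ _
    · erw [Category.comp_id, Category.id_comp]
      exact ofEpiComplex_d_one_zero π
  | n + 1 =>
    rw [HomologicalComplex.exactAt_iff' _ (n + 3) (n + 2) (n + 1) (by simp) (by simp)]
    let e : (ofEpiComplex π).X (n + 3) ≅ syzygies ((ofEpiComplex π).d (n + 2) (n + 1)) :=
      ChainComplex.mkXIso P (syzygies π) (syzygies (d π)) (d π)
      (d (d π)) (by erw [Category.assoc, kernel.condition, comp_zero])
      (fun S => ⟨_, d S.f, by erw [Category.assoc, kernel.condition, comp_zero]⟩) n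
    have hd : (ofEpiComplex π).d (n + 3) (n + 2) =
        e.hom ≫ d ((ofEpiComplex π).d (n + 2) (n + 1)) :=
      ChainComplex.mk_d _ _ _ _ _ _ _ n
    refine ShortComplex.exact_of_iso ?_ (exact_d_f ((ofEpiComplex π).d (n + 2) (n + 1)))
    refine ShortComplex.isoMk e.symm (Iso.refl _) (Iso.refl _) ?_ ?_
    · erw [Category.comp_id]
      exact (Iso.inv_comp_eq e).2 hd
    · erw [Category.comp_id, Category.id_comp]
      rfl

instance [Projective P] (n : ℕ) : Projective ((ofEpiComplex π).X n) := by
  obtain (_ | _ | _ | n) := n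
  · exact ‹Projective P›
  all_goals apply Projective.projective_over

noncomputable def ofEpi [Projective P] [Epi π] : ProjectiveResolution X where
  complex := ofEpiComplex π
  π := (ChainComplex.toSingle₀Equiv _ _).symm ⟨π, by
    rw [ofEpiComplex_d_one_zero]; exact (by simp : (Projective.π (kernel π) ≫ kernel.ι π) ≫ π = 0)⟩
  quasiIso := ⟨fun n => by
    cases n
    · rw [ChainComplex.quasiIsoAt₀_iff, ShortComplex.quasiIso_iff_of_zeros']
      · refine (ShortComplex.exact_and_epi_g_iff_of_iso ?_).2
          ⟨exact_d_f π, by dsimp; infer_instance⟩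
        exact ShortComplex.isoMk (Iso.refl _) (Iso.refl _) (Iso.refl _)
          (by erw [Category.id_comp, Category.comp_id]; exact (ofEpiComplex_d_one_zero π).symm)
          (by erw [Category.id_comp, Category.comp_id]
              exact (ChainComplex.toSingle₀Equiv_symm_apply_f_zero (C := ofEpiComplex π) π _).symm)
      all_goals rfl
    · rw [quasiIsoAt_iff_exactAt']
      · apply ofEpiComplex_exactAt_succ
      · apply ChainComplex.exactAt_succ_single_obj⟩

lemma ofEpi_π_f_zero [Projective P] [Epi π] : (ofEpi π).π.f 0 = π :=
  ChainComplex.toSingle₀Equiv_symm_apply_f_zero _ _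

end OfEpi

end CategoryTheory.ProjectiveResolution

section ExtOneOfEpi

variable {C : Type*} [Category C] [Abelian C] [EnoughProjectives C] {X P : C} [Projective P]
  (π : P ⟶ X) [Epi π] {Y : C}

open ProjectiveResolution

/- `(ofEpi π).π.f 0` equals `π` only propositionally (its target is the degree-`0` object of
the single complex), so the equivalence is transported by rewriting, inside `Nonempty`. -/
lemma nonempty_ext_one_linearEquiv_of_epi (R : Type*) [Ring R] [Linear R C] :
    Nonempty (((Ext R C 1).obj (Opposite.op X)).obj Y ≃ₗ[R]
      (kernel π ⟶ Y) ⧸ LinearMap.range (Linear.leftComp R Y (kernel.ι π))) := by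
  have e : ((Ext R C 1).obj (Opposite.op X)).obj Y ≃ₗ[R]
      (kernel ((ofEpi π).π.f 0 : P ⟶ X) ⟶ Y) ⧸
        LinearMap.range (Linear.leftComp R Y (kernel.ι ((ofEpi π).π.f 0 : P ⟶ X))) :=
    (ofEpi π).extOneLinearEquiv R Y
  rw [ofEpi_π_f_zero] at e
  exact ⟨e⟩

lemma subsingleton_ext_one_iff_of_epi (R : Type*) [Ring R] [Linear R C] :
    Subsingleton (((Ext R C 1).obj (Opposite.op X)).obj Y) ↔
      ∀ f : kernel π ⟶ Y, ∃ h : P ⟶ Y, kernel.ι π ≫ h = f := by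
  obtain ⟨e⟩ := nonempty_ext_one_linearEquiv_of_epi π (Y := Y) R
  rw [e.toEquiv.subsingleton_congr, Submodule.Quotient.subsingleton_iff, LinearMap.range_eq_top]
  rfl

lemma finrank_ext_one_eq_one_of_epi {k : Type*} [Field k] [Linear k C] (q : kernel π ⟶ Y)
    (hq : ∀ h : P ⟶ Y, kernel.ι π ≫ h ≠ q)
    (hspan : ∀ f : kernel π ⟶ Y, ∃ (c : k) (h : P ⟶ Y), c • q + kernel.ι π ≫ h = f) :
    Module.finrank k (((Ext k C 1).obj (Opposite.op X)).obj Y) = 1 := by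
  obtain ⟨e⟩ := nonempty_ext_one_linearEquiv_of_epi π (Y := Y) k
  rw [e.finrank_eq]
  refine finrank_eq_one (Submodule.Quotient.mk q) ?_ fun w => ?_
  · rw [Ne, Submodule.Quotient.mk_eq_zero]
    rintro ⟨h, hh⟩
    exact hq h hh
  · obtain ⟨f, rfl⟩ := Submodule.Quotient.mk_surjective _ w
    obtain ⟨c, h, rfl⟩ := hspan f
    refine ⟨c, ?_⟩
    rw [← Submodule.Quotient.mk_smul, Submodule.Quotient.eq]
    exact ⟨-h, by simp⟩

end ExtOneOfEpi

lemma exists_smul_id_eq_of_finrank_eq_one {C : Type*} [Category C] [Preadditive C] {k : Type*}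
    [Field k] [Linear k C] {X : C} (h : Module.finrank k (X ⟶ X) = 1) (u : X ⟶ X) :
    ∃ c : k, c • 𝟙 X = u := by
  have hid : 𝟙 X ≠ 0 := by
    intro h0
    have : Subsingleton (X ⟶ X) := ⟨fun a b => by
      rw [← Category.comp_id a, ← Category.comp_id b, h0, comp_zero, comp_zero]⟩
    rw [Module.finrank_zero_of_subsingleton] at h
    exact zero_ne_one h
  exact (finrank_eq_one_iff_of_nonzero' _ hid).1 h u

namespace CategoryTheory.ShortComplex.ShortExact

variable {C : Type*} [Category C] [Abelian C] {S : ShortComplex C}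

section Hom

variable (R : Type*) [Ring R] [Linear R C]

lemma finrank_hom_X₂_eq (hS : S.ShortExact) (T : C) (h : ∀ f : T ⟶ S.X₃, f = 0) :
    Module.finrank R (T ⟶ S.X₂) = Module.finrank R (T ⟶ S.X₁) := by
  have := hS.mono_f
  refine (LinearEquiv.ofBijective (Linear.rightComp R T S.f)
    ⟨fun a b hab => (cancel_mono S.f).1 hab, fun g => ?_⟩).finrank_eq.symm
  exact ⟨hS.exact.lift g (h _), hS.exact.lift_f g (h _)⟩

lemma finrank_X₂_hom_eq (hS : S.ShortExact) (T : C) (h : ∀ f : S.X₁ ⟶ T, f = 0) :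
    Module.finrank R (S.X₂ ⟶ T) = Module.finrank R (S.X₃ ⟶ T) := by
  have := hS.epi_g
  refine (LinearEquiv.ofBijective (Linear.leftComp R T S.g)
    ⟨fun a b hab => (cancel_epi S.g).1 hab, fun g => ?_⟩).finrank_eq.symm
  exact ⟨hS.exact.desc g (h _), hS.exact.g_desc g (h _)⟩

end Hom

section KernelComp

variable (hS : S.ShortExact) {P : C} (α : P ⟶ S.X₂)

noncomputable def kernelCompLift : kernel (α ≫ S.g) ⟶ S.X₁ :=
  have := hS.mono_f
  hS.exact.lift (kernel.ι (α ≫ S.g) ≫ α) ((Category.assoc _ _ _).trans (kernel.condition _))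

lemma kernelCompLift_f : hS.kernelCompLift α ≫ S.f = kernel.ι (α ≫ S.g) ≫ α :=
  have := hS.mono_f
  hS.exact.lift_f _ _

variable [Epi α]

instance epi_kernelCompLift : Epi (hS.kernelCompLift α) := by
  have := hS.mono_f
  rw [epi_iff_surjective_up_to_refinements]
  intro T y
  obtain ⟨T', π, _, x, hx⟩ := surjective_up_to_refinements_of_epi α (y ≫ S.f)
  have hxg : x ≫ α ≫ S.g = 0 := by
    rw [← Category.assoc, ← hx, Category.assoc, Category.assoc, S.zero, comp_zero, comp_zero]
  refine ⟨T', π, inferInstance, kernel.lift _ x hxg, ?_⟩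
  rw [← cancel_mono S.f, Category.assoc, Category.assoc, hS.kernelCompLift_f,
    kernel.lift_ι_assoc, hx]

lemma exists_kernelCompLift_comp_eq {T : C} (f : kernel (α ≫ S.g) ⟶ T)
    (hf : kernel.lift (α ≫ S.g) (kernel.ι α) (by rw [kernel.condition_assoc, zero_comp]) ≫ f = 0) :
    ∃ u : S.X₁ ⟶ T, hS.kernelCompLift α ≫ u = f := by
  have := hS.mono_f
  let q := hS.kernelCompLift α
  have hι : (kernel.ι q ≫ kernel.ι (α ≫ S.g)) ≫ α = 0 := by
    rw [Category.assoc, ← hS.kernelCompLift_f, kernel.condition_assoc, zero_comp]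
  have hm : kernel.lift α _ hι ≫
      kernel.lift (α ≫ S.g) (kernel.ι α) (by rw [kernel.condition_assoc, zero_comp]) =
        kernel.ι q := by
    rw [← cancel_mono (kernel.ι (α ≫ S.g)), Category.assoc, kernel.lift_ι, kernel.lift_ι]
  have hf' : kernel.ι q ≫ f = 0 := by
    rw [← hm, Category.assoc, hf, comp_zero]
  exact ⟨Abelian.epiDesc q f hf', Abelian.comp_epiDesc _ _ _⟩

end KernelComp

section Ext

variable [EnoughProjectives C] {k : Type*} [Field k] [Linear k C]

lemma subsingleton_ext_one_X₂_X₁ (hS : S.ShortExact)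
    (hB : Subsingleton (((Ext k C 1).obj (Opposite.op S.X₂)).obj S.X₂))
    (hg : ∀ t : S.X₂ ⟶ S.X₃, ∃ c : k, c • S.g = t) :
    Subsingleton (((Ext k C 1).obj (Opposite.op S.X₂)).obj S.X₁) := by
  have := hS.mono_f
  let α := Projective.π S.X₂
  rw [subsingleton_ext_one_iff_of_epi α] at hB ⊢
  intro m
  obtain ⟨β, hβ⟩ := hB (m ≫ S.f)
  have hβg : kernel.ι α ≫ β ≫ S.g = 0 := by
    rw [← Category.assoc, hβ, Category.assoc, S.zero, comp_zero]
  obtain ⟨c, hc⟩ := hg (Abelian.epiDesc α (β ≫ S.g) hβg)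
  have hβc : (β - c • α) ≫ S.g = 0 := by
    rw [Preadditive.sub_comp, Linear.smul_comp, ← Linear.comp_smul, hc, Abelian.comp_epiDesc,
      sub_self]
  refine ⟨hS.exact.lift _ hβc, ?_⟩
  rw [← cancel_mono S.f, Category.assoc, hS.exact.lift_f, Preadditive.comp_sub, hβ,
    Linear.comp_smul, kernel.condition, smul_zero, sub_zero]

lemma finrank_ext_one_X₃_X₁ (hS : S.ShortExact)
    (hsplit : ¬ ∃ s : S.X₃ ⟶ S.X₂, s ≫ S.g = 𝟙 S.X₃)
    (hA : Module.finrank k (S.X₁ ⟶ S.X₁) = 1) (hBX : Module.finrank k (S.X₂ ⟶ S.X₃) = 1)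
    (hB : Subsingleton (((Ext k C 1).obj (Opposite.op S.X₂)).obj S.X₂)) :
    Module.finrank k (((Ext k C 1).obj (Opposite.op S.X₃)).obj S.X₁) = 1 := by
  have := hS.epi_g
  let α := Projective.π S.X₂
  have hg : S.g ≠ 0 := fun hg => hsplit ⟨0, by
    rw [← cancel_epi S.g, hg, zero_comp, zero_comp]⟩
  have hA₁ := hS.subsingleton_ext_one_X₂_X₁ hB ((finrank_eq_one_iff_of_nonzero' _ hg).1 hBX)
  refine finrank_ext_one_eq_one_of_epi (α ≫ S.g) (hS.kernelCompLift α)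
    (fun h hh => ?_) (fun f => ?_)
  · have hcomp : kernel.ι (α ≫ S.g) ≫ (α - h ≫ S.f) = 0 := by
      rw [Preadditive.comp_sub, ← Category.assoc, hh, hS.kernelCompLift_f, sub_self]
    refine hsplit ⟨Abelian.epiDesc (α ≫ S.g) _ hcomp, ?_⟩
    rw [← cancel_epi (α ≫ S.g), ← Category.assoc, Abelian.comp_epiDesc, Preadditive.sub_comp,
      Category.assoc, S.zero, comp_zero, sub_zero, Category.comp_id]
  · obtain ⟨h, hh⟩ := (subsingleton_ext_one_iff_of_epi α k).1 hA₁
      (kernel.lift (α ≫ S.g) (kernel.ι α) (by rw [kernel.condition_assoc, zero_comp]) ≫ f)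
    obtain ⟨u, hu⟩ := hS.exists_kernelCompLift_comp_eq α (f - kernel.ι (α ≫ S.g) ≫ h) (by
      rw [Preadditive.comp_sub, kernel.lift_ι_assoc, hh, sub_self])
    obtain ⟨c, rfl⟩ := exists_smul_id_eq_of_finrank_eq_one hA u
    rw [Linear.comp_smul, Category.comp_id] at hu
    exact ⟨c, h, by rw [hu, sub_add_cancel]⟩

end Ext

end CategoryTheory.ShortComplex.ShortExact

theorem orthogonal_exceptional_pair_dims_general
    (k : Type*) [Field k] (C : Type*) [Category C] [Abelian C] [Linear k C]
    [EnoughProjectives C]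
    (E₁ E₂ E : C)
    (hE₁ : IsExceptional k C E₁) (hE₂ : IsExceptional k C E₂) (hE : IsExceptional k C E)
    (horth₂ : ∀ f : E₂ ⟶ E₁, f = 0)
    (i : E₂ ⟶ E) (p : E ⟶ E₁) (w : i ≫ p = 0)
    (hex : (ShortComplex.mk i p w).ShortExact)
    (hnonsplit : ¬ ∃ s : E₁ ⟶ E, s ≫ p = 𝟙 E₁) :
    Module.finrank k (((Ext k C 1).obj (Opposite.op E₁)).obj E₂) = 1 ∧
    Module.finrank k (E₂ ⟶ E) = 1 ∧
    Module.finrank k (E ⟶ E₁) = 1 := by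
  have hHomE : Module.finrank k (E ⟶ E₁) = 1 :=
    (hex.finrank_X₂_hom_eq k E₁ horth₂).trans hE₁.1
  exact ⟨hex.finrank_ext_one_X₃_X₁ hnonsplit hE₂.1 hHomE hE.2,
    (hex.finrank_hom_X₂_eq k E₂ horth₂).trans hE₂.1, hHomE⟩

/-- Let `(E₁, E₂)` be an orthogonal exceptional pair (`Hom(E₁,E₂) = Hom(E₂,E₁) = 0` and
`Ext¹(E₂,E₁) = 0`) in a `k`-linear abelian category, and suppose there is a non-split short
exact sequence `0 → E₂ → E → E₁ → 0` with `E` exceptional.  Then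
`dim_k Ext¹(E₁,E₂) = dim_k Hom(E₂,E) = dim_k Hom(E,E₁) = 1`. -/
theorem orthogonal_exceptional_pair_dims
    (k : Type*) [Field k] (C : Type*) [Category C] [Abelian C] [Linear k C]
    [EnoughProjectives C]
    (E₁ E₂ E : C)
    (hE₁ : IsExceptional k C E₁) (hE₂ : IsExceptional k C E₂) (hE : IsExceptional k C E)
    (horth₁ : ∀ f : E₁ ⟶ E₂, f = 0) (horth₂ : ∀ f : E₂ ⟶ E₁, f = 0)
    (horth₃ : Subsingleton (((Ext k C 1).obj (Opposite.op E₂)).obj E₁))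
    (i : E₂ ⟶ E) (p : E ⟶ E₁) (w : i ≫ p = 0)
    (hex : (ShortComplex.mk i p w).ShortExact)
    (hnonsplit : ¬ ∃ s : E₁ ⟶ E, s ≫ p = 𝟙 E₁) :
    Module.finrank k (((Ext k C 1).obj (Opposite.op E₁)).obj E₂) = 1 ∧
    Module.finrank k (E₂ ⟶ E) = 1 ∧
    Module.finrank k (E ⟶ E₁) = 1 :=
  orthogonal_exceptional_pair_dims_general k C E₁ E₂ E hE₁ hE₂ hE horth₂ i p w hex hnonsplit
end

section
/- Let A be a finitary abelian category over a finite field and let A, B, C, M be objects. Then the iterated Hall numbers satisfy the associativity identity Σ_{[X]} F_{AB}^X F_{XC}^M = Σ_{[Y]} F_{AY}^M F_{BC}^Y, where F_{AB}^M = |{X ⊆ M : X ≅ B, M/X ≅ A}| and the sums are over isomorphism classes of objects. -/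
open CategoryTheory CategoryTheory.Limits

/-- The Hall number `F_{AB}^M`: the number of subobjects `X ⊆ M` with `X ≅ B` and
`M/X ≅ A`. -/
noncomputable def hallNumber {C : Type*} [Category C] [Abelian C] (A B M : C) : ℕ :=
  Nat.card {X : Subobject M // Nonempty ((X : C) ≅ B) ∧ Nonempty (cokernel X.arrow ≅ A)}

/-!
Both sides count the flags `N ≤ N' ≤ M` with `N ≅ D`, `N'/N ≅ B` and `M/N' ≅ A`. Grouped by `N'`,
they are counted by `Σ_Y F_{AY}^M F_{BD}^Y`, because the subobjects of `N'` are the subobjects of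
`M` below `N'`. Grouped by `N`, they are counted by `Σ_X F_{AB}^X F_{XD}^M`, because images and
preimages along `M ↠ M/N` match the subobjects of `M/N` with the subobjects of `M` above `N`, and
the second and third isomorphism theorems identify the subquotients. All counts are finite: a
subobject isomorphic to `B` is determined by a morphism `B ⟶ M`, one with quotient `A` by a
morphism `M ⟶ A`.
-/

namespace HallAlgebra

open Subobject

section Subobjects

variable {C : Type*} [Category C]

lemma eq_of_inv_comp_arrow_eq {B M : C} {X₁ X₂ : Subobject M} (e₁ : (X₁ : C) ≅ B)
    (e₂ : (X₂ : C) ≅ B) (h : e₁.inv ≫ X₁.arrow = e₂.inv ≫ X₂.arrow) : X₁ = X₂ :=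
  le_antisymm
    (le_of_comm (e₁.hom ≫ e₂.inv) (by rw [Category.assoc, ← h, Iso.hom_inv_id_assoc]))
    (le_of_comm (e₂.hom ≫ e₁.inv) (by rw [Category.assoc, h, Iso.hom_inv_id_assoc]))

lemma le_of_comp_arrow_eq {X T : C} {K I : Subobject X} (q : T ⟶ (K : C)) [StrongEpi q]
    (u : T ⟶ (I : C)) (w : u ≫ I.arrow = q ≫ K.arrow) : K ≤ I :=
  have sq : CommSq u q I.arrow K.arrow := ⟨w⟩
  le_of_comm sq.lift sq.fac_right

lemma ofLE_mk_comp_arrow {M : C} {U : Subobject M} (Z : Subobject (U : C))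
    (h : mk (Z.arrow ≫ U.arrow) ≤ U) :
    ofLE _ U h = (underlyingIso (Z.arrow ≫ U.arrow)).hom ≫ Z.arrow := by
  rw [← cancel_mono U.arrow, ofLE_arrow, Category.assoc, underlyingIso_hom_comp_eq_mk]

variable [HasZeroMorphisms C] [HasCokernels C]

noncomputable def cokernelMkArrowIso {X M : C} (f : X ⟶ M) [Mono f] :
    cokernel (mk f).arrow ≅ cokernel f :=
  cokernelIsoOfEq (underlyingIso_hom_comp_eq_mk f).symm ≪≫ cokernelEpiComp _ _

noncomputable def cokernelArrowIsoOfEq {M : C} {X Y : Subobject M} (h : X = Y) :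
    cokernel X.arrow ≅ cokernel Y.arrow := by
  subst h
  exact Iso.refl _

end Subobjects

section AbelianSubobjects

variable {C : Type*} [Category C] [Abelian C]

lemma kernelSubobject_cokernel_π {M : C} (N : Subobject M) :
    kernelSubobject (cokernel.π N.arrow) = N :=
  le_antisymm
    (le_of_comm (Abelian.monoLift N.arrow _ (kernelSubobject_arrow_comp _))
      (Abelian.monoLift_comp _ _ _))
    (le_kernelSubobject _ _ (cokernel.condition _))

lemma eq_of_cokernel_π_comp_eq {A M : C} {X₁ X₂ : Subobject M} (e₁ : cokernel X₁.arrow ≅ A)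
    (e₂ : cokernel X₂.arrow ≅ A)
    (h : cokernel.π X₁.arrow ≫ e₁.hom = cokernel.π X₂.arrow ≫ e₂.hom) : X₁ = X₂ := by
  simpa only [kernelSubobject_comp_mono, kernelSubobject_cokernel_π] using
    congrArg (fun f : M ⟶ A => kernelSubobject f) h

end AbelianSubobjects

section Correspondence

variable {C : Type*} [Category C] [Abelian C] {M : C} (N : Subobject M)

local notation "π" => cokernel.π (Subobject.arrow N)

noncomputable abbrev quotImage (N' : Subobject M) : Subobject (cokernel N.arrow) :=
  imageSubobject (N'.arrow ≫ π)

noncomputable abbrev quotPreimage (K : Subobject (cokernel N.arrow)) : Subobject M :=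
  kernelSubobject (π ≫ cokernel.π K.arrow)

lemma le_quotPreimage_quotImage (N' : Subobject M) : N' ≤ quotPreimage N (quotImage N N') := by
  refine le_kernelSubobject _ _ ?_
  calc N'.arrow ≫ π ≫ cokernel.π (quotImage N N').arrow
      = factorThruImageSubobject (N'.arrow ≫ π) ≫ (quotImage N N').arrow ≫
          cokernel.π (quotImage N N').arrow := by
        rw [imageSubobject_arrow_comp_assoc, Category.assoc]
    _ = 0 := by rw [cokernel.condition, comp_zero]

/-- After pulling back along `N' ↠ I`, an element of `W` differs from an element of `N'` by one
of `N`. -/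
lemma le_of_comp_π_factors {N' W : Subobject M} (h : N ≤ N') {I : C} (m : I ⟶ cokernel N.arrow)
    (e : (N' : C) ⟶ I) [Epi e] (he : e ≫ m = N'.arrow ≫ π)
    (s : (W : C) ⟶ I) (hs : s ≫ m = W.arrow ≫ π) : W ≤ N' := by
  have hd : (pullback.fst e s ≫ N'.arrow - pullback.snd e s ≫ W.arrow) ≫ π = 0 := by
    rw [Preadditive.sub_comp, Category.assoc, Category.assoc, ← he, ← hs,
      pullback.condition_assoc, sub_self]
  have := strongEpi_of_epi (pullback.snd e s)
  refine le_of_comp_arrow_eq (pullback.snd e s)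
    (pullback.fst e s - Abelian.monoLift N.arrow _ hd ≫ ofLE N N' h) ?_
  rw [Preadditive.sub_comp, Category.assoc, ofLE_arrow, Abelian.monoLift_comp, sub_sub_cancel]

lemma quotPreimage_quotImage_le {N' : Subobject M} (h : N ≤ N') :
    quotPreimage N (quotImage N N') ≤ N' := by
  have hW : ((quotPreimage N (quotImage N N')).arrow ≫ π) ≫
      cokernel.π (quotImage N N').arrow = 0 := by
    rw [Category.assoc]; exact kernelSubobject_arrow_comp _
  exact le_of_comp_π_factors N h _ _ (imageSubobject_arrow_comp _) _
    (Abelian.monoLift_comp _ _ hW)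

lemma quotPreimage_quotImage {N' : Subobject M} (h : N ≤ N') :
    quotPreimage N (quotImage N N') = N' :=
  le_antisymm (quotPreimage_quotImage_le N h) (le_quotPreimage_quotImage N N')

lemma quotImage_quotPreimage (K : Subobject (cokernel N.arrow)) :
    quotImage N (quotPreimage N K) = K := by
  have hκ : ((quotPreimage N K).arrow ≫ π) ≫ cokernel.π K.arrow = 0 := by
    rw [Category.assoc]; exact kernelSubobject_arrow_comp _
  refine le_antisymm
    (imageSubobject_le _ (Abelian.monoLift K.arrow _ hκ) (Abelian.monoLift_comp _ _ _)) ?_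
  have hsnd : pullback.snd K.arrow π ≫ π ≫ cokernel.π K.arrow = 0 := by
    rw [← Category.assoc, ← pullback.condition, Category.assoc, cokernel.condition, comp_zero]
  have := strongEpi_of_epi (pullback.fst K.arrow π)
  refine le_of_comp_arrow_eq (pullback.fst K.arrow π)
    (factorThruKernelSubobject _ _ hsnd ≫ factorThruImageSubobject _) ?_
  rw [Category.assoc, imageSubobject_arrow_comp, ← Category.assoc,
    factorThruKernelSubobject_comp_arrow, pullback.condition]

lemma quotPreimage_le (K : Subobject (cokernel N.arrow)) : N ≤ quotPreimage N K :=
  le_kernelSubobject _ _ (by rw [← Category.assoc, cokernel.condition, zero_comp])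

end Correspondence

section Isomorphisms

variable {C : Type*} [Category C] [Abelian C]

noncomputable def cokernelImageSubobjectArrowIso {X Y : C} (f : X ⟶ Y) :
    cokernel (imageSubobject f).arrow ≅ cokernel f :=
  cokernelMkArrowIso (image.ι f) ≪≫ cokernelImageι f

noncomputable def cokernelKernelSubobjectArrowIso {X Y : C} (f : X ⟶ Y) :
    cokernel (kernelSubobject f).arrow ≅ (imageSubobject f : C) :=
  cokernelIsoOfEq (kernelSubobject_arrow f).symm ≪≫ cokernelEpiComp _ _ ≪≫
    Abelian.coimageIsoImage' f ≪≫ (imageSubobjectIso f).symm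

variable {M : C} (N : Subobject M)

local notation "π" => cokernel.π (Subobject.arrow N)

lemma kernelSubobject_arrow_comp_π {N' : Subobject M} (h : N ≤ N') :
    kernelSubobject (N'.arrow ≫ π) = mk (ofLE N N' h) := by
  refine le_antisymm ?_ ?_
  · refine le_mk_of_comm
      (Abelian.monoLift N.arrow ((kernelSubobject (N'.arrow ≫ π)).arrow ≫ N'.arrow)
        (by rw [Category.assoc, kernelSubobject_arrow_comp])) ?_
    rw [← cancel_mono N'.arrow, Category.assoc, ofLE_arrow, Abelian.monoLift_comp]
  · refine le_kernelSubobject _ _ ?_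
    rw [← underlyingIso_hom_comp_eq_mk, Category.assoc, ofLE_arrow_assoc,
      cokernel.condition, comp_zero]

noncomputable def quotImageIso {N' : Subobject M} (h : N ≤ N') :
    (quotImage N N' : C) ≅ cokernel (ofLE N N' h) :=
  (cokernelKernelSubobjectArrowIso _).symm ≪≫
    cokernelArrowIsoOfEq (kernelSubobject_arrow_comp_π N h) ≪≫ cokernelMkArrowIso _

noncomputable def cokernelArrowCompπIso {N' : Subobject M} (h : N ≤ N') :
    cokernel (N'.arrow ≫ π) ≅ cokernel N'.arrow where
  hom := cokernel.desc _ (cokernel.desc N.arrow (cokernel.π N'.arrow)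
      (by rw [← ofLE_arrow h, Category.assoc, cokernel.condition, comp_zero]))
    (by rw [Category.assoc, cokernel.π_desc, cokernel.condition])
  inv := cokernel.desc _ (π ≫ cokernel.π (N'.arrow ≫ π))
    (by rw [← Category.assoc]; exact cokernel.condition _)
  hom_inv_id := by
    rw [← cancel_epi (cokernel.π (N'.arrow ≫ π)), ← cancel_epi π]
    simp only [cokernel.π_desc_assoc, cokernel.π_desc, Category.comp_id]
  inv_hom_id := by
    rw [← cancel_epi (cokernel.π N'.arrow)]
    simp only [cokernel.π_desc_assoc, Category.assoc, cokernel.π_desc, Category.comp_id]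

noncomputable def cokernelQuotImageArrowIso {N' : Subobject M} (h : N ≤ N') :
    cokernel (quotImage N N').arrow ≅ cokernel N'.arrow :=
  cokernelImageSubobjectArrowIso _ ≪≫ cokernelArrowCompπIso N h

end Isomorphisms

section HallSubobjects

variable {C : Type*} [Category C]

/-- As for modules of finite length, `X ⊆ M` has type `B` if `X ≅ B` and cotype `A` if `M/X ≅ A`. -/
abbrev SubobjectOfType (B M : C) : Type _ := {X : Subobject M // Nonempty ((X : C) ≅ B)}

instance finite_subobjectOfType (B M : C) [Finite (B ⟶ M)] : Finite (SubobjectOfType B M) :=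
  Finite.of_injective (fun X => X.2.some.inv ≫ X.1.arrow) fun _ _ h =>
    Subtype.ext (eq_of_inv_comp_arrow_eq _ _ h)

variable [Abelian C]

abbrev SubobjectOfCotype (A M : C) : Type _ := {X : Subobject M // Nonempty (cokernel X.arrow ≅ A)}

abbrev HallSubobjects (A B M : C) : Type _ :=
  {X : Subobject M // Nonempty ((X : C) ≅ B) ∧ Nonempty (cokernel X.arrow ≅ A)}

instance finite_subobjectOfCotype (A M : C) [Finite (M ⟶ A)] : Finite (SubobjectOfCotype A M) :=
  Finite.of_injective (fun X => cokernel.π X.1.arrow ≫ X.2.some.hom) fun _ _ h =>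
    Subtype.ext (eq_of_cokernel_π_comp_eq _ _ h)

instance finite_hallSubobjects (A B M : C) [Finite (B ⟶ M)] : Finite (HallSubobjects A B M) :=
  Finite.of_injective (fun X => (⟨X.1, X.2.1⟩ : SubobjectOfType B M)) fun _ _ h =>
    Subtype.ext (congrArg (fun Z : SubobjectOfType B M => Z.1) h)

lemma hallNumber_eq_card_subobjectOfType (A B M : C) :
    hallNumber A B M = Nat.card {X : SubobjectOfType B M // Nonempty (cokernel X.1.arrow ≅ A)} :=
  Nat.card_congr (Equiv.subtypeSubtypeEquivSubtypeInter _ _).symm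

lemma hallNumber_eq_card_subobjectOfCotype (A B M : C) :
    hallNumber A B M = Nat.card {X : SubobjectOfCotype A M // Nonempty ((X.1 : C) ≅ B)} :=
  Nat.card_congr ((Equiv.subtypeSubtypeEquivSubtypeInter _ _).trans
    (Equiv.subtypeEquivRight fun _ => and_comm)).symm

lemma hallNumber_congr (A B : C) {M M' : C} (e : M ≅ M') :
    hallNumber A B M = hallNumber A B M' := by
  refine Nat.card_congr (Equiv.subtypeEquiv (mapIsoToOrderIso e).toEquiv fun X => ?_)
  have hX : (map e.hom).obj X = mk (X.arrow ≫ e.hom) := by rw [← map_mk, mk_arrow]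
  have iso : ((map e.hom).obj X : C) ≅ X := isoOfEq _ _ hX ≪≫ underlyingIso _
  have coker : cokernel ((map e.hom).obj X).arrow ≅ cokernel X.arrow :=
    cokernelArrowIsoOfEq hX ≪≫ cokernelMkArrowIso _ ≪≫ cokernelCompIsIso _ _
  exact ⟨fun ⟨⟨b⟩, ⟨a⟩⟩ => ⟨⟨iso ≪≫ b⟩, ⟨coker ≪≫ a⟩⟩,
    fun ⟨⟨b⟩, ⟨a⟩⟩ => ⟨⟨iso.symm ≪≫ b⟩, ⟨coker.symm ≪≫ a⟩⟩⟩

end HallSubobjects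

section Flags

variable {C : Type*} [Category C] [Abelian C]

@[ext]
structure HallFlag (A B D M : C) where
  lower : Subobject M
  upper : Subobject M
  le : lower ≤ upper
  lower_iso : Nonempty ((lower : C) ≅ D)
  middle_iso : Nonempty (cokernel (ofLE lower upper le) ≅ B)
  cokernel_iso : Nonempty (cokernel upper.arrow ≅ A)

namespace HallFlag

variable {A B D M : C}

noncomputable def ofUpper (x : Σ U : SubobjectOfCotype A M, HallSubobjects B D (U.1 : C)) :
    HallFlag A B D M where
  lower := (subobjectOrderIso x.1.1 x.2.1).1
  upper := x.1.1
  le := (subobjectOrderIso x.1.1 x.2.1).2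
  lower_iso := ⟨underlyingIso _ ≪≫ x.2.2.1.some⟩
  middle_iso := ⟨cokernelIsoOfEq (ofLE_mk_comp_arrow _ _) ≪≫
    cokernelEpiComp (underlyingIso (x.2.1.arrow ≫ x.1.1.arrow)).hom _ ≪≫
    x.2.2.2.some⟩
  cokernel_iso := x.1.2

lemma ofUpper_bijective : Function.Bijective (ofUpper (A := A) (B := B) (D := D) (M := M)) := by
  constructor
  · rintro ⟨⟨U, hU⟩, Z⟩ ⟨⟨U', hU'⟩, Z'⟩ h
    obtain rfl : U = U' := congrArg upper h
    obtain rfl : Z = Z' :=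
      Subtype.ext ((subobjectOrderIso U).injective (Subtype.ext (congrArg lower h)))
    rfl
  · intro c
    refine ⟨⟨⟨c.upper, c.cokernel_iso⟩, ⟨(subobjectOrderIso c.upper).symm ⟨c.lower, c.le⟩,
      ⟨underlyingIso (ofLE c.lower c.upper c.le) ≪≫ c.lower_iso.some⟩,
      ⟨cokernelMkArrowIso (ofLE c.lower c.upper c.le) ≪≫ c.middle_iso.some⟩⟩⟩, ?_⟩
    ext1
    · exact congrArg Subtype.val ((subobjectOrderIso c.upper).apply_symm_apply ⟨c.lower, c.le⟩)
    · rfl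

noncomputable def ofLower
    (x : Σ L : SubobjectOfType D M, HallSubobjects A B (cokernel L.1.arrow)) :
    HallFlag A B D M where
  lower := x.1.1
  upper := quotPreimage x.1.1 x.2.1
  le := quotPreimage_le x.1.1 x.2.1
  lower_iso := x.1.2
  middle_iso := ⟨(quotImageIso _ (quotPreimage_le x.1.1 x.2.1)).symm ≪≫
    isoOfEq _ _ (quotImage_quotPreimage _ _) ≪≫ x.2.2.1.some⟩
  cokernel_iso := ⟨(cokernelQuotImageArrowIso _ (quotPreimage_le x.1.1 x.2.1)).symm ≪≫
    cokernelArrowIsoOfEq (quotImage_quotPreimage _ _) ≪≫ x.2.2.2.some⟩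

lemma ofLower_bijective : Function.Bijective (ofLower (A := A) (B := B) (D := D) (M := M)) := by
  constructor
  · rintro ⟨⟨L, hL⟩, K⟩ ⟨⟨L', hL'⟩, K'⟩ h
    obtain rfl : L = L' := congrArg lower h
    have hK := congrArg (quotImage L) (congrArg upper h)
    simp only [ofLower, quotImage_quotPreimage] at hK
    obtain rfl : K = K' := Subtype.ext hK
    rfl
  · intro c
    refine ⟨⟨⟨c.lower, c.lower_iso⟩, ⟨quotImage c.lower c.upper,
      ⟨quotImageIso _ c.le ≪≫ c.middle_iso.some⟩,
      ⟨cokernelQuotImageArrowIso _ c.le ≪≫ c.cokernel_iso.some⟩⟩⟩, ?_⟩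
    ext1
    · rfl
    · exact quotPreimage_quotImage _ c.le

end HallFlag

end Flags

section Counting

lemma finsum_mul_card_fiber {S ι : Type*} [Finite S] (f : S → ι) (g : ι → ℕ) :
    ∑ᶠ i, g i * Nat.card {s // f s = i} = ∑ᶠ s, g (f s) := by
  classical
  have := Fintype.ofFinite S
  have hsupp : (Function.support fun i => g i * Nat.card {s // f s = i}) ⊆
      (Finset.univ.image f : Set ι) := by
    intro i hi
    obtain ⟨⟨s, rfl⟩⟩ := (Nat.card_ne_zero.mp (right_ne_zero_of_mul hi)).1
    simp
  rw [finsum_eq_sum_of_support_subset _ hsupp, finsum_eq_sum_of_fintype, Finset.sum_comp]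
  refine Finset.sum_congr rfl fun i _ => ?_
  rw [Nat.card_eq_fintype_card, Fintype.card_subtype, smul_eq_mul, mul_comm]

lemma finsum_card_eq_card_sigma {S : Type*} [Finite S] (T : S → Type*) [∀ s, Finite (T s)] :
    ∑ᶠ s, Nat.card (T s) = Nat.card (Σ s, T s) := by
  have := Fintype.ofFinite S
  rw [finsum_eq_sum_of_fintype, Nat.card_sigma]

variable {C : Type*} [Category C]

lemma finsum_skeleton_mul_card {S : Type*} [Finite S] (obj : S → C) (g : C → ℕ)
    (hg : ∀ {X Y : C}, (X ≅ Y) → g X = g Y) :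
    ∑ᶠ X : Skeleton C, g ((fromSkeleton C).obj X) *
        Nat.card {s // Nonempty (obj s ≅ (fromSkeleton C).obj X)} = ∑ᶠ s, g (obj s) := by
  simp_rw [← toSkeleton_eq_iff]
  rw [finsum_mul_card_fiber]
  exact finsum_congr fun s => hg (fromSkeletonToSkeletonIso (obj s))

variable [Abelian C]

lemma finsum_hallNumber_mul_hallNumber_cokernel (A B D M : C) [Finite (D ⟶ M)] :
    ∑ᶠ X : Skeleton C,
        hallNumber A B ((fromSkeleton C).obj X) * hallNumber ((fromSkeleton C).obj X) D M =
      ∑ᶠ L : SubobjectOfType D M, hallNumber A B (cokernel L.1.arrow) := by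
  rw [← finsum_skeleton_mul_card _ _ (hallNumber_congr A B)]
  exact finsum_congr fun X => by rw [hallNumber_eq_card_subobjectOfType _ D M]

lemma finsum_hallNumber_mul_hallNumber_subobject (A B D M : C) [Finite (M ⟶ A)] :
    ∑ᶠ Y : Skeleton C,
        hallNumber A ((fromSkeleton C).obj Y) M * hallNumber B D ((fromSkeleton C).obj Y) =
      ∑ᶠ U : SubobjectOfCotype A M, hallNumber B D (U.1 : C) := by
  rw [← finsum_skeleton_mul_card _ _ (hallNumber_congr B D)]
  exact finsum_congr fun Y => by rw [hallNumber_eq_card_subobjectOfCotype A _ M, mul_comm]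

end Counting

end HallAlgebra

open HallAlgebra

/-- Associativity of Hall numbers in a finitary abelian category:
`Σ_{[X]} F_{AB}^X F_{XC}^M = Σ_{[Y]} F_{AY}^M F_{BC}^Y`, the sums running over the
isomorphism classes of objects (represented by a skeleton of the category). -/
theorem hallNumber_assoc
    (C : Type*) [Category C] [Abelian C]
    [∀ X Y : C, Finite (X ⟶ Y)]
    (A B D M : C) :
    ∑ᶠ X : Skeleton C,
        hallNumber A B ((fromSkeleton C).obj X) * hallNumber ((fromSkeleton C).obj X) D M =
      ∑ᶠ Y : Skeleton C,
        hallNumber A ((fromSkeleton C).obj Y) M * hallNumber B D ((fromSkeleton C).obj Y) := by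
  calc _ = ∑ᶠ L : SubobjectOfType D M, hallNumber A B (cokernel L.1.arrow) :=
        finsum_hallNumber_mul_hallNumber_cokernel A B D M
    _ = Nat.card (Σ L : SubobjectOfType D M, HallSubobjects A B (cokernel L.1.arrow)) :=
        finsum_card_eq_card_sigma _
    _ = Nat.card (HallFlag A B D M) := Nat.card_congr (.ofBijective _ HallFlag.ofLower_bijective)
    _ = Nat.card (Σ U : SubobjectOfCotype A M, HallSubobjects B D (U.1 : C)) :=
        (Nat.card_congr (.ofBijective _ HallFlag.ofUpper_bijective)).symm
    _ = ∑ᶠ U : SubobjectOfCotype A M, hallNumber B D (U.1 : C) := (finsum_card_eq_card_sigma _).symm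
    _ = _ := (finsum_hallNumber_mul_hallNumber_subobject A B D M).symm
end

section
/- Let q ≥ 2 be an integer and define f_n(q) = Σ_{i=1}^{n}(−1)^{i−1}(2i−1)q^{n+1−i} + (−1)^n(n+1) for n ≥ 1. Then f_n(q) > 0 for all n ≥ 1 and all integers q ≥ 3; moreover f_n(2) = 0 if and only if n = 1. -/
/-! The recursion `f_{n+1}(q) = q f_n(q) ± (n(q-1) - 2)` gives, by induction from `f_1(q) = q - 2`,
the lower bound `f_n(q) ≥ n(q-1) - 1` for all `q ≥ 2`. It is positive for `q ≥ 3`, and at `q = 2`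
it reads `f_n(2) ≥ n - 1`, which is positive unless `n = 1`. -/

open Finset

/-- The value of the Hall polynomial `f_n` at an integer `q`:
`f_n(q) = Σ_{i=1}^n (-1)^{i-1}(2i-1) q^{n+1-i} + (-1)^n (n+1)` for `n ≥ 1`. -/
def hallFval (n : ℕ) (q : ℤ) : ℤ :=
  (∑ i ∈ Finset.Icc 1 n, (-1 : ℤ) ^ (i - 1) * (2 * i - 1) * q ^ (n + 1 - i)) +
    (-1 : ℤ) ^ n * (n + 1)

theorem hallFval_succ (n : ℕ) (q : ℤ) :
    hallFval (n + 1) q = q * hallFval n q + (-1) ^ n * (n * (q - 1) - 2) := by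
  have shift : ∀ i ∈ Icc 1 n, (-1 : ℤ) ^ (i - 1) * (2 * i - 1) * q ^ (n + 1 + 1 - i)
      = q * ((-1 : ℤ) ^ (i - 1) * (2 * i - 1) * q ^ (n + 1 - i)) := by
    intro i hi
    rw [show n + 1 + 1 - i = n + 1 - i + 1 by grind, pow_succ]
    ring
  rw [hallFval, sum_Icc_succ_top (by omega), sum_congr rfl shift, ← mul_sum, hallFval,
    Nat.add_sub_cancel, Nat.add_sub_cancel_left]
  push_cast
  ring

theorem hallFval_one (q : ℤ) : hallFval 1 q = q - 2 := by
  simp [hallFval]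
  ring

theorem le_hallFval {n : ℕ} (hn : 1 ≤ n) {q : ℤ} (hq : 2 ≤ q) :
    n * (q - 1) - 1 ≤ hallFval n q := by
  induction n, hn using Nat.le_induction with
  | base => rw [hallFval_one]; push_cast; linarith
  | succ n hn ih =>
    have hq_mul := mul_le_mul_of_nonneg_left ih (by omega : (0 : ℤ) ≤ q)
    rw [hallFval_succ]
    push_cast
    rcases Nat.even_or_odd n with hev | hodd
    · have h2n : (2 : ℤ) ≤ n := by obtain ⟨k, rfl⟩ := hev; push_cast; omega
      have : 2 ≤ (n : ℤ) * (q - 1) := by nlinarith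
      rw [hev.neg_one_pow]
      nlinarith
    · have hn1 : (1 : ℤ) ≤ n := by exact_mod_cast hn
      -- the step reduces to `0 ≤ (q - 2) * (n * (q - 1) - 2)`, and this product equals
      -- `(n - 1) * (q - 1) * (q - 2) + (q - 2) * (q - 3)`
      have hq23 : 0 ≤ (q - 2) * (q - 3) := by
        rcases (by omega : q = 2 ∨ 3 ≤ q) with rfl | h3
        · norm_num
        · nlinarith
      rw [hodd.neg_one_pow]
      nlinarith

/-- `f_n(q) > 0` for all `n ≥ 1` and all integers `q ≥ 3`; moreover, for `n ≥ 1`,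
`f_n(2) = 0` if and only if `n = 1`. -/
theorem hallFval_pos_and_vanishing :
    (∀ n : ℕ, 1 ≤ n → ∀ q : ℤ, 3 ≤ q → 0 < hallFval n q) ∧
    (∀ n : ℕ, 1 ≤ n → (hallFval n 2 = 0 ↔ n = 1)) := by
  refine ⟨fun n hn q hq => ?_, fun n hn => ⟨fun h => ?_, ?_⟩⟩
  · have := le_hallFval hn (by omega : (2 : ℤ) ≤ q)
    have : (1 : ℤ) ≤ n := by exact_mod_cast hn
    nlinarith
  · have := le_hallFval hn le_rfl
    omega
  · rintro rfl
    simp [hallFval_one]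
end
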